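/- arXiv:2501.07073 — 4 statements merged into one kernel-verified Lean document; each statement's English description precedes it below -/
import Mathlib

section
/- The function Q(x) = 4(6+|x|²)/(2+|x|²)² on ℝ³ satisfies the elliptic profile equation -ΔQ + (1/2)(x·∇Q + 2Q) - Q² - ∇Q·∇Δ⁻¹Q = 0, where Δ⁻¹Q denotes the Newtonian potential solving Δc = Q (explicitly one may verify with c such that ∂_r c = D₂⁻¹Q where D₂⁻¹Q(r) = r⁻²∫₀^r Q(s)s² ds). -/
open MeasureTheory

/-- The Laplacian of `f : ℝ³ → ℝ`, written as the sum of second derivatives of the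
coordinate slices of `f`. -/
noncomputable def laplacian3 (f : EuclideanSpace ℝ (Fin 3) → ℝ)
    (x : EuclideanSpace ℝ (Fin 3)) : ℝ :=
  ∑ i : Fin 3, deriv (deriv fun t : ℝ => f (x + t • EuclideanSpace.single i 1)) 0

/-!
Writing `Q(x) = q(|x|²)` with `q(u) = 4(6+u)/(2+u)²`, every term of the equation is explicit:
`∇Q = 2q'(|x|²) x`, `ΔQ = 4|x|² q''(|x|²) + 6 q'(|x|²)`, and `∫₀^r Q(s) s² ds = 4r³/(2+r²)`
because `d/ds (4s³/(2+s²)) = Q(s) s²`, so `∇c = 4/(2+|x|²) · x`. The equation then reduces to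
an identity between rational functions of `|x|²`.
-/

section RadialCalculus

variable {E : Type*} [NormedAddCommGroup E] [InnerProductSpace ℝ E]

theorem hasGradientAt_comp_norm_sq [CompleteSpace E] {g : ℝ → ℝ} {g' : ℝ} {x : E}
    (hg : HasDerivAt g g' (‖x‖ ^ 2)) :
    HasGradientAt (fun y : E => g (‖y‖ ^ 2)) ((2 * g') • x) x := by
  have hF := hg.comp_hasFDerivAt x (hasStrictFDerivAt_norm_sq x).hasFDerivAt
  have hdual : InnerProductSpace.toDual ℝ E ((2 * g') • x) = g' • (2 • innerSL ℝ x) := by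
    ext y
    simp only [map_smul, smul_apply, InnerProductSpace.toDual_apply_apply,
      smul_eq_mul, coe_innerSL_apply, nsmul_eq_mul, Nat.cast_ofNat]
    ring
  exact hasGradientAt_iff_hasFDerivAt.mpr (hdual ▸ hF)

theorem deriv_deriv_comp_norm_sq_line {g g' : ℝ → ℝ} {g'' : ℝ} (x v : E)
    (hg : ∀ u, 0 ≤ u → HasDerivAt g (g' u) u) (hg' : HasDerivAt g' g'' (‖x‖ ^ 2)) :
    deriv (deriv fun t : ℝ => g (‖x + t • v‖ ^ 2)) 0
      = g'' * (2 * inner ℝ x v) ^ 2 + 2 * g' (‖x‖ ^ 2) * ‖v‖ ^ 2 := by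
  have hline (t : ℝ) : HasDerivAt (fun s : ℝ => x + s • v) v t := by
    simpa using ((hasDerivAt_id t).smul_const v).const_add x
  have hfirst : deriv (fun t : ℝ => g (‖x + t • v‖ ^ 2))
      = fun t => g' (‖x + t • v‖ ^ 2) * (2 * inner ℝ (x + t • v) v) := by
    funext t
    exact ((hg (‖x + t • v‖ ^ 2) (sq_nonneg _)).comp t (hline t).norm_sq).deriv
  have hinner : HasDerivAt (fun t : ℝ => 2 * inner ℝ (x + t • v) v) (2 * ‖v‖ ^ 2) 0 := by
    simpa [real_inner_self_eq_norm_sq] using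
      ((hline 0).inner ℝ (hasDerivAt_const 0 v)).const_mul 2
  have hcomp :
      HasDerivAt (fun t : ℝ => g' (‖x + t • v‖ ^ 2)) (g'' * (2 * inner ℝ x v)) 0 := by
    refine ((show HasDerivAt g' g'' (‖x + (0 : ℝ) • v‖ ^ 2) by simpa using hg').comp 0
      (hline 0).norm_sq).congr_deriv ?_
    simp
  rw [hfirst]
  refine (hcomp.mul hinner).deriv.trans ?_
  simp only [zero_smul, add_zero]
  ring

theorem laplacian3_comp_norm_sq {g g' : ℝ → ℝ} {g'' : ℝ} (x : EuclideanSpace ℝ (Fin 3))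
    (hg : ∀ u, 0 ≤ u → HasDerivAt g (g' u) u) (hg' : HasDerivAt g' g'' (‖x‖ ^ 2)) :
    laplacian3 (fun y => g (‖y‖ ^ 2)) x = 4 * g'' * ‖x‖ ^ 2 + 6 * g' (‖x‖ ^ 2) := by
  simp only [laplacian3, deriv_deriv_comp_norm_sq_line x _ hg hg',
    EuclideanSpace.inner_single_right, EuclideanSpace.real_norm_sq_eq x]
  simp only [Real.ringHom_apply, Fin.sum_univ_three, PiLp.norm_single, norm_one, one_pow, one_mul,
    mul_one]
  ring

end RadialCalculus

theorem hasDerivAt_mul_add_div_add_pow (a k m : ℝ) (n : ℕ) {u : ℝ} (hu : m + u ≠ 0) :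
    HasDerivAt (fun v => a * (k + v) / (m + v) ^ n)
      (a * ((m + u) - n * (k + u)) / (m + u) ^ (n + 1)) u := by
  have hnum : HasDerivAt (fun v => a * (k + v)) a u := by
    simpa using ((hasDerivAt_id u).const_add k).const_mul a
  have hden : HasDerivAt (fun v => (m + v) ^ n) (n * (m + u) ^ (n - 1)) u := by
    simpa using ((hasDerivAt_id u).const_add m).fun_pow n
  refine (hnum.div hden (pow_ne_zero n hu)).congr_deriv ?_
  rcases n with _ | n
  · simp [hu]
  · field_simp
    simp only [Nat.add_sub_cancel]
    ring

noncomputable def qProfile (u : ℝ) : ℝ := 4 * (6 + u) / (2 + u) ^ 2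

theorem hasDerivAt_qProfile {u : ℝ} (hu : 2 + u ≠ 0) :
    HasDerivAt qProfile (-4 * (10 + u) / (2 + u) ^ 3) u := by
  refine (hasDerivAt_mul_add_div_add_pow 4 6 2 2 hu).congr_deriv ?_
  ring

theorem hasDerivAt_qProfile_deriv {u : ℝ} (hu : 2 + u ≠ 0) :
    HasDerivAt (fun v => -4 * (10 + v) / (2 + v) ^ 3) (8 * (14 + u) / (2 + u) ^ 4) u := by
  refine (hasDerivAt_mul_add_div_add_pow (-4) 10 2 3 hu).congr_deriv ?_
  ring

theorem integral_Ioo_qProfile_sq_mul_sq {r : ℝ} (hr : 0 ≤ r) :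
    ∫ s in Set.Ioo (0 : ℝ) r, qProfile (s ^ 2) * s ^ 2 = 4 * r ^ 3 / (2 + r ^ 2) := by
  rw [← integral_Ioc_eq_integral_Ioo, ← intervalIntegral.integral_of_le hr]
  have hprim (s : ℝ) :
      HasDerivAt (fun s : ℝ => 4 * s ^ 3 / (2 + s ^ 2)) (qProfile (s ^ 2) * s ^ 2) s := by
    have hpos : (0 : ℝ) < 2 + s ^ 2 := by positivity
    refine ((((hasDerivAt_pow 3 s).const_mul 4).div ((hasDerivAt_pow 2 s).const_add 2)
      hpos.ne')).congr_deriv ?_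
    simp only [qProfile]
    field_simp
    ring
  have hcont : Continuous fun s : ℝ => qProfile (s ^ 2) * s ^ 2 := by
    unfold qProfile
    fun_prop (disch := intro s; positivity)
  rw [intervalIntegral.integral_eq_sub_of_hasDerivAt (fun s _ => hprim s)
    (hcont.intervalIntegrable _ _)]
  simp

theorem stmt_0_general (Q c : EuclideanSpace ℝ (Fin 3) → ℝ)
    (hQ : ∀ x, Q x = 4 * (6 + ‖x‖ ^ 2) / (2 + ‖x‖ ^ 2) ^ 2)
    (hgrad : ∀ x ≠ 0,
      gradient c x
        = (((‖x‖ ^ 2)⁻¹ *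
              ∫ s in Set.Ioo (0 : ℝ) ‖x‖, (4 * (6 + s ^ 2) / (2 + s ^ 2) ^ 2) * s ^ 2) / ‖x‖)
            • x) :
    ∀ x ≠ 0,
      -laplacian3 Q x + (1 / 2) * ((inner ℝ x (gradient Q x) : ℝ) + 2 * Q x)
          - Q x ^ 2 - (inner ℝ (gradient Q x) (gradient c x) : ℝ) = 0 := by
  intro x hx
  obtain rfl : Q = fun y => qProfile (‖y‖ ^ 2) := funext hQ
  have hr : 0 < ‖x‖ := norm_pos_iff.mpr hx
  have hu : 2 + ‖x‖ ^ 2 ≠ 0 := by positivity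
  have hlapQ := laplacian3_comp_norm_sq x (fun _ _ ↦ hasDerivAt_qProfile (by positivity))
    (hasDerivAt_qProfile_deriv hu)
  have hgradQ := (hasGradientAt_comp_norm_sq (hasDerivAt_qProfile hu)).gradient
  have hgradc :
      gradient c x = ((‖x‖ ^ 2)⁻¹ * (4 * ‖x‖ ^ 3 / (2 + ‖x‖ ^ 2)) / ‖x‖) • x := by
    rw [hgrad x hx, ← integral_Ioo_qProfile_sq_mul_sq hr.le]
    rfl
  rw [hlapQ, hgradQ, hgradc, real_inner_smul_right, real_inner_smul_left, real_inner_smul_right,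
    real_inner_self_eq_norm_sq]
  simp only [qProfile]
  field_simp
  ring

/-- The explicit profile `Q(x) = 4(6+|x|²)/(2+|x|²)²` on `ℝ³` satisfies the elliptic
equation `-ΔQ + (1/2)(x·∇Q + 2Q) - Q² - ∇Q·∇Δ⁻¹Q = 0`, where `Δ⁻¹Q` is the
Newtonian potential `c` solving `Δc = Q`, whose (radial) gradient is
`∇c(x) = (D₂⁻¹Q(|x|)/|x|)·x` with `D₂⁻¹Q(r) = r⁻² ∫₀^r Q(s)s² ds`. -/
theorem stmt_0 (Q c : EuclideanSpace ℝ (Fin 3) → ℝ)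
    (hQ : ∀ x, Q x = 4 * (6 + ‖x‖ ^ 2) / (2 + ‖x‖ ^ 2) ^ 2)
    (hc : ∀ x, laplacian3 c x = Q x)
    (hgrad : ∀ x ≠ 0,
      gradient c x
        = (((‖x‖ ^ 2)⁻¹ *
              ∫ s in Set.Ioo (0 : ℝ) ‖x‖, (4 * (6 + s ^ 2) / (2 + s ^ 2) ^ 2) * s ^ 2) / ‖x‖)
            • x) :
    ∀ x ≠ 0,
      -laplacian3 Q x + (1 / 2) * ((inner ℝ x (gradient Q x) : ℝ) + 2 * Q x)
          - Q x ^ 2 - (inner ℝ (gradient Q x) (gradient c x) : ℝ) = 0 :=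
  stmt_0_general Q c hQ hgrad
end

section
/- Let l ≥ 2 and f_lm ∈ C_c^∞((0,∞)) (viewed as a radial profile in L²(ℝ⁺, r²dr)). Define Δ_l⁻¹f(r) = -(1/(2l+1)) ∫₀^∞ (r_<^l / r_>^{l+1}) f(r') r'² dr' where r_< = min(r,r'), r_> = max(r,r'). Then the pointwise bound |Δ_l⁻¹ f(r)| ≤ (2 r^{3/2} / ((2l+1)(2l-3)^{1/2})) · (∫₀^∞ |f(s)|² ds)^{1/2} holds for all r > 0. -/
open MeasureTheory

private lemma gsq_facts (l : ℕ) (hl : 2 ≤ l) (r : ℝ) (hr : 0 < r) :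
    IntegrableOn (fun s => ((min r s) ^ l / (max r s) ^ (l + 1) * s ^ 2) ^ 2) (Set.Ioi 0) ∧
    ∫ s in Set.Ioi (0:ℝ), ((min r s) ^ l / (max r s) ^ (l + 1) * s ^ 2) ^ 2
      ≤ 2 * r ^ 3 / (2 * (l:ℝ) - 3) := by
  set g : ℝ → ℝ := fun s => (min r s) ^ l / (max r s) ^ (l + 1) * s ^ 2 with hg
  have hl3 : (1:ℝ) ≤ 2 * (l:ℝ) - 3 := by
    have : (2:ℝ) ≤ (l:ℝ) := by exact_mod_cast hl
    linarith
  have hl3' : (0:ℝ) < 2 * (l:ℝ) - 3 := by linarith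
  have ha : (2:ℝ) - 2 * l < -1 := by
    have : (2:ℝ) ≤ (l:ℝ) := by exact_mod_cast hl
    linarith
  have hsplit : (Set.Ioi (0:ℝ)) = Set.Ioc 0 r ∪ Set.Ioi r := (Set.Ioc_union_Ioi_eq_Ioi hr.le).symm
  have hint1 : IntegrableOn (fun s => (g s)^2) (Set.Ioc 0 r) := by
    apply Continuous.integrableOn_Ioc
    apply Continuous.pow
    apply Continuous.mul _ (continuous_pow 2)
    apply Continuous.div ((continuous_const.min continuous_id).pow l)
      ((continuous_const.max continuous_id).pow (l+1))
    intro x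
    have : 0 < max r x := lt_max_of_lt_left hr
    exact pow_ne_zero _ this.ne'
  have heq2 : ∀ s ∈ Set.Ioi r, (g s)^2 = r ^ (2*l) * s ^ ((2:ℝ) - 2 * l) := by
    intro s hs
    have hs0 : 0 < s := hr.trans hs
    have hmin : min r s = r := min_eq_left (le_of_lt hs)
    have hmax : max r s = s := max_eq_right (le_of_lt hs)
    have : s ^ ((2:ℝ) - 2 * l) = s ^ 4 / s ^ (2*l+2) := by
      rw [← Real.rpow_natCast s 4, ← Real.rpow_natCast s (2*l+2),
        ← Real.rpow_sub hs0]
      norm_num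
      ring_nf
    rw [hg]
    simp only [hmin, hmax, this]
    field_simp
    ring
  have hint2 : IntegrableOn (fun s => (g s)^2) (Set.Ioi r) := by
    have h0 : IntegrableOn (fun x => r ^ (2*l) * x ^ ((2:ℝ) - 2 * l)) (Set.Ioi r) :=
      (integrableOn_Ioi_rpow_of_lt ha hr).const_mul _
    exact h0.congr_fun (fun x hx => (heq2 x hx).symm) measurableSet_Ioi
  have hval1 : ∫ s in Set.Ioc 0 r, (g s)^2 = r ^ 3 / (2 * (l:ℝ) + 5) := by
    have : ∀ s ∈ Set.Ioc (0:ℝ) r, (g s)^2 = s ^ (2*l+4) / r ^ (2*l+2) := by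
      intro s hs
      have hmin : min r s = s := min_eq_right hs.2
      have hmax : max r s = r := max_eq_left hs.2
      rw [hg]
      simp only [hmin, hmax]
      field_simp
      ring
    rw [setIntegral_congr_fun measurableSet_Ioc this]
    rw [integral_div, ← intervalIntegral.integral_of_le hr.le, integral_pow]
    have h1 : ((2*l+4 : ℕ) : ℝ) + 1 = 2 * (l:ℝ) + 5 := by push_cast; ring
    rw [h1]
    have h2 : r ^ (2*l+4+1) = r ^ 3 * r ^ (2*l+2) := by ring
    rw [h2]
    field_simp
    ring
  have hval2 : ∫ s in Set.Ioi r, (g s)^2 = r ^ 3 / (2 * (l:ℝ) - 3) := by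
    rw [setIntegral_congr_fun measurableSet_Ioi heq2, integral_const_mul,
      integral_Ioi_rpow_of_lt ha hr]
    have h1 : r ^ (2*l) = r ^ ((2*(l:ℝ)) : ℝ) := by
      rw [← Real.rpow_natCast r (2*l)]; norm_num
    have h2 : (2:ℝ) - 2*(l:ℝ) + 1 = 3 - 2*(l:ℝ) := by ring
    have hne : (3:ℝ) - 2*(l:ℝ) ≠ 0 := by linarith
    have e1 : r ^ ((2*(l:ℝ)):ℝ) * (-r ^ ((3:ℝ) - 2*(l:ℝ)) / ((3:ℝ) - 2*(l:ℝ)))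
        = (r ^ ((2*(l:ℝ)):ℝ) * r ^ ((3:ℝ) - 2*(l:ℝ))) / (2*(l:ℝ) - 3) := by
      field_simp
      ring
    have key : r ^ ((2*(l:ℝ)):ℝ) * r ^ ((3:ℝ) - 2*(l:ℝ)) = r ^ (3:ℕ) := by
      rw [← Real.rpow_add hr, ← Real.rpow_natCast r 3]
      norm_num
    rw [h2, h1, e1, key]
  constructor
  · rw [hsplit]; exact hint1.union hint2
  · rw [hsplit, setIntegral_union (Set.Ioc_disjoint_Ioi le_rfl) measurableSet_Ioi hint1 hint2,
      hval1, hval2]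
    have hr3 : (0:ℝ) < r ^ 3 := by positivity
    have hle : r ^ 3 / (2 * (l:ℝ) + 5) ≤ r ^ 3 / (2 * (l:ℝ) - 3) := by
      apply div_le_div_of_nonneg_left hr3.le hl3' (by linarith)
    have h2x : 2 * r ^ 3 / (2 * (l:ℝ) - 3)
        = r ^ 3 / (2 * (l:ℝ) - 3) + r ^ 3 / (2 * (l:ℝ) - 3) := by ring
    linarith

/-- Pointwise bound for the nonlocal operator `Δ_l⁻¹` in spherical class `l ≥ 2`:
`|Δ_l⁻¹ f(r)| ≤ 2 r^{3/2} / ((2l+1)√(2l-3)) · ‖f‖_{L²(dr)}`. -/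
theorem stmt_7 (l : ℕ) (hl : 2 ≤ l) (f : ℝ → ℝ) (hf : ContDiff ℝ (⊤ : ℕ∞) f)
    (hcs : HasCompactSupport f) (hsupp : tsupport f ⊆ Set.Ioi 0) :
    ∀ r ∈ Set.Ioi (0 : ℝ),
      |(-(1 / (2 * (l : ℝ) + 1))) *
          ∫ r' in Set.Ioi (0 : ℝ), (min r r') ^ l / (max r r') ^ (l + 1) * f r' * r' ^ 2|
        ≤ 2 * r ^ ((3 : ℝ) / 2) / ((2 * (l : ℝ) + 1) * Real.sqrt (2 * (l : ℝ) - 3)) *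
            Real.sqrt (∫ s in Set.Ioi (0 : ℝ), (f s) ^ 2) := by
  intro r hr
  have hr0 : (0:ℝ) < r := hr
  set g : ℝ → ℝ := fun s => (min r s) ^ l / (max r s) ^ (l + 1) * s ^ 2 with hg
  have hl2 : (2:ℝ) ≤ (l:ℝ) := by exact_mod_cast hl
  have hl3' : (0:ℝ) < 2 * (l:ℝ) - 3 := by linarith
  have hgc : Continuous g := by
    apply Continuous.mul _ (continuous_pow 2)
    apply Continuous.div ((continuous_const.min continuous_id).pow l)
      ((continuous_const.max continuous_id).pow (l+1))
    intro x
    have : 0 < max r x := lt_max_of_lt_left hr0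
    exact pow_ne_zero _ this.ne'
  obtain ⟨hgint, hgbound⟩ := gsq_facts l hl r hr0
  have hfc : Continuous f := hf.continuous
  -- memℒp facts
  have hfsq : Integrable (fun s => f s ^ 2) := by
    have h1 : (fun s => f s ^ 2) = f * f := by funext s; simp [sq]
    rw [h1]
    exact ((hfc.mul hfc).integrable_of_hasCompactSupport hcs.mul_left)
  have hfmem : MemLp f 2 (volume.restrict (Set.Ioi 0)) :=
    (memLp_two_iff_integrable_sq (hfc.aestronglyMeasurable.restrict)).2 hfsq.integrableOn
  have hgmem : MemLp g 2 (volume.restrict (Set.Ioi 0)) :=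
    (memLp_two_iff_integrable_sq (hgc.aestronglyMeasurable.restrict)).2 hgint
  have hpq : Real.HolderConjugate 2 2 := Real.holderConjugate_iff.mpr ⟨one_lt_two, by norm_num⟩
  -- Cauchy–Schwarz
  have hCS := integral_mul_le_Lp_mul_Lq_of_nonneg (μ := volume.restrict (Set.Ioi 0)) hpq
    (f := fun s => |g s|) (g := fun s => |f s|)
    (Filter.Eventually.of_forall fun s => abs_nonneg _)
    (Filter.Eventually.of_forall fun s => abs_nonneg _)
    (by convert hgmem.abs using 1; (ext s; simp); simp) (by convert hfmem.abs using 1; (ext s; simp); simp)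
  have habs2g : ∫ s in Set.Ioi (0:ℝ), |g s| ^ (2:ℝ) = ∫ s in Set.Ioi (0:ℝ), g s ^ 2 := by
    apply integral_congr_ae
    filter_upwards with s
    rw [show (2:ℝ) = ((2:ℕ):ℝ) by norm_num, Real.rpow_natCast, sq_abs]
  have habs2f : ∫ s in Set.Ioi (0:ℝ), |f s| ^ (2:ℝ) = ∫ s in Set.Ioi (0:ℝ), f s ^ 2 := by
    apply integral_congr_ae
    filter_upwards with s
    rw [show (2:ℝ) = ((2:ℕ):ℝ) by norm_num, Real.rpow_natCast, sq_abs]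
  rw [habs2g, habs2f] at hCS
  -- bound the integral
  have hIeq : (∫ r' in Set.Ioi (0:ℝ), (min r r') ^ l / (max r r') ^ (l + 1) * f r' * r' ^ 2)
      = ∫ s in Set.Ioi (0:ℝ), g s * f s := by
    congr 1
    funext s
    rw [hg]
    ring
  have hstep1 : |∫ s in Set.Ioi (0:ℝ), g s * f s| ≤ ∫ s in Set.Ioi (0:ℝ), |g s| * |f s| := by
    have := norm_integral_le_integral_norm (μ := volume.restrict (Set.Ioi 0))
      (f := fun s => g s * f s)
    simpa [Real.norm_eq_abs, abs_mul] using this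
  -- identify rpow with sqrt
  have hFnn : 0 ≤ ∫ s in Set.Ioi (0:ℝ), f s ^ 2 := integral_nonneg fun s => sq_nonneg _
  have hGnn : 0 ≤ ∫ s in Set.Ioi (0:ℝ), g s ^ 2 := integral_nonneg fun s => sq_nonneg _
  rw [← Real.sqrt_eq_rpow, ← Real.sqrt_eq_rpow] at hCS
  -- bound sqrt of g² integral
  have hsq1 : Real.sqrt (∫ s in Set.Ioi (0:ℝ), g s ^ 2)
      ≤ Real.sqrt (2 * r ^ 3 / (2 * (l:ℝ) - 3)) := Real.sqrt_le_sqrt hgbound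
  have hsq2 : Real.sqrt (2 * r ^ 3 / (2 * (l:ℝ) - 3))
      ≤ 2 * r ^ ((3:ℝ)/2) / Real.sqrt (2 * (l:ℝ) - 3) := by
    have h2 : Real.sqrt 2 ≤ 2 := by
      have h4 : Real.sqrt 2 ≤ Real.sqrt 4 := Real.sqrt_le_sqrt (by norm_num)
      rwa [show (4:ℝ) = 2^2 by norm_num, Real.sqrt_sq (by norm_num : (0:ℝ) ≤ 2)] at h4
    have hrs : Real.sqrt (r^3) = r ^ ((3:ℝ)/2) := by
      rw [Real.sqrt_eq_rpow, ← Real.rpow_natCast r 3, ← Real.rpow_mul hr0.le]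
      norm_num
    rw [Real.sqrt_div (by positivity), Real.sqrt_mul (by norm_num), hrs]
    gcongr
  have hsqrtpos : 0 < Real.sqrt (2 * (l:ℝ) - 3) := Real.sqrt_pos.2 hl3'
  have hcpos : (0:ℝ) < 2 * (l:ℝ) + 1 := by linarith
  calc |(-(1 / (2 * (l : ℝ) + 1))) *
          ∫ r' in Set.Ioi (0 : ℝ), (min r r') ^ l / (max r r') ^ (l + 1) * f r' * r' ^ 2|
      = (1 / (2 * (l:ℝ) + 1)) * |∫ s in Set.Ioi (0:ℝ), g s * f s| := by
        rw [hIeq, abs_mul, abs_neg, abs_of_pos (by positivity)]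
    _ ≤ (1 / (2 * (l:ℝ) + 1)) *
          (Real.sqrt (∫ s in Set.Ioi (0:ℝ), g s ^ 2) * Real.sqrt (∫ s in Set.Ioi (0:ℝ), f s ^ 2)) := by
        apply mul_le_mul_of_nonneg_left (hstep1.trans hCS) (by positivity)
    _ ≤ (1 / (2 * (l:ℝ) + 1)) *
          ((2 * r ^ ((3:ℝ)/2) / Real.sqrt (2 * (l:ℝ) - 3)) * Real.sqrt (∫ s in Set.Ioi (0:ℝ), f s ^ 2)) := by
        apply mul_le_mul_of_nonneg_left
          (mul_le_mul_of_nonneg_right (hsq1.trans hsq2) (Real.sqrt_nonneg _)) (by positivity)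
    _ = 2 * r ^ ((3 : ℝ) / 2) / ((2 * (l : ℝ) + 1) * Real.sqrt (2 * (l : ℝ) - 3)) *
            Real.sqrt (∫ s in Set.Ioi (0 : ℝ), (f s) ^ 2) := by
        field_simp
end

section
/- Let l ≥ 1 and f ∈ C_c^∞((0,∞)). With Δ_l⁻¹ f(r) = -(1/(2l+1)) ∫₀^∞ (r_<^l / r_>^{l+1}) f(r') r'² dr', the pointwise bound |Δ_l⁻¹ f(r)| ≤ (2 r^{1/2} / ((2l+1)(2l-1)^{1/2})) · (∫₀^∞ |f(s)|² s² ds)^{1/2} holds for all r > 0. -/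
open MeasureTheory

/-- Pointwise bound for `Δ_l⁻¹` in spherical class `l ≥ 1`:
`|Δ_l⁻¹ f(r)| ≤ 2 r^{1/2} / ((2l+1)√(2l-1)) · ‖f‖_{L²(r²dr)}`. -/
theorem stmt_8 (l : ℕ) (hl : 1 ≤ l) (f : ℝ → ℝ) (hf : ContDiff ℝ (⊤ : ℕ∞) f)
    (hcs : HasCompactSupport f) (hsupp : tsupport f ⊆ Set.Ioi 0) :
    ∀ r ∈ Set.Ioi (0 : ℝ),
      |(-(1 / (2 * (l : ℝ) + 1))) *
          ∫ r' in Set.Ioi (0 : ℝ), (min r r') ^ l / (max r r') ^ (l + 1) * f r' * r' ^ 2|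
        ≤ 2 * r ^ ((1 : ℝ) / 2) / ((2 * (l : ℝ) + 1) * Real.sqrt (2 * (l : ℝ) - 1)) *
            Real.sqrt (∫ s in Set.Ioi (0 : ℝ), (f s) ^ 2 * s ^ 2) := by
  intro r hr
  rw [Set.mem_Ioi] at hr
  have hr0 : r ≠ 0 := ne_of_gt hr
  set μ := volume.restrict (Set.Ioi (0:ℝ)) with hμ
  set g : ℝ → ℝ := fun s => (min r s) ^ l / (max r s) ^ (l + 1) * s with hg
  set h : ℝ → ℝ := fun s => f s * s with hh
  have hmaxpos : ∀ s : ℝ, 0 < max r s := fun s => lt_max_iff.2 (Or.inl hr)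
  have hgc : Continuous g := by
    apply Continuous.mul _ continuous_id
    exact ((continuous_const.min continuous_id).pow l).div
      ((continuous_const.max continuous_id).pow (l + 1))
      (fun s => pow_ne_zero _ (hmaxpos s).ne')
  have hhc : Continuous h := hf.continuous.mul continuous_id
  have hhcs : HasCompactSupport h := hcs.mul_right
  -- the squared kernel integral, split
  have hsplit : Set.Ioc (0:ℝ) r ∪ Set.Ioi r = Set.Ioi (0:ℝ) :=
    Set.Ioc_union_Ioi_eq_Ioi hr.le
  have hint1 : IntegrableOn (fun s => g s ^ 2) (Set.Ioc (0:ℝ) r) :=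
    (hgc.pow 2).integrableOn_Ioc
  have hexp : (-(2 * (l:ℝ))) < -1 := by
    have : (1:ℝ) ≤ (l:ℝ) := by exact_mod_cast hl
    linarith
  have heqIoi : ∀ s ∈ Set.Ioi r, r ^ (2*l) * s ^ (-(2 * (l:ℝ))) = g s ^ 2 := by
    intro s hs
    rw [Set.mem_Ioi] at hs
    have hs0 : 0 < s := lt_trans hr hs
    have hmin : min r s = r := min_eq_left hs.le
    have hmax : max r s = s := max_eq_right hs.le
    simp only [hg, hmin, hmax]
    rw [Real.rpow_neg hs0.le]
    have h2l : s ^ (2*(l:ℝ)) = s ^ (2*l : ℕ) := by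
      rw [← Real.rpow_natCast s (2*l)]; norm_cast
    rw [h2l]
    field_simp
    ring
  have hint2 : IntegrableOn (fun s => g s ^ 2) (Set.Ioi r) := by
    apply IntegrableOn.congr_fun
      (((integrableOn_Ioi_rpow_of_lt hexp hr).const_mul (r ^ (2*l))))
      (fun s hs => heqIoi s hs) measurableSet_Ioi
  have hintg : Integrable (fun s => g s ^ 2) μ := by
    rw [hμ, ← hsplit]
    exact (integrableOn_union.2 ⟨hint1, hint2⟩)
  -- compute the two pieces
  have hI1 : ∫ s in Set.Ioc (0:ℝ) r, g s ^ 2 = r / (2*(l:ℝ)+3) := by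
    have e1 : ∀ s ∈ Set.Ioc (0:ℝ) r, g s ^ 2 = (1 / r ^ (l+1)) ^ 2 * s ^ (2*l+2) := by
      intro s hs
      have hmin : min r s = s := min_eq_right hs.2
      have hmax : max r s = r := max_eq_left hs.2
      simp only [hg, hmin, hmax]
      field_simp
      ring
    rw [setIntegral_congr_fun measurableSet_Ioc e1, integral_const_mul,
      ← intervalIntegral.integral_of_le hr.le, integral_pow]
    have h23 : ((2*l+2 : ℕ) : ℝ) + 1 = 2*(l:ℝ)+3 := by push_cast; ring
    rw [zero_pow (by omega), h23]
    have hne : (2*(l:ℝ)+3) ≠ 0 := by positivity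
    field_simp
    ring
  have hI2 : ∫ s in Set.Ioi r, g s ^ 2 = r / (2*(l:ℝ)-1) := by
    rw [← setIntegral_congr_fun measurableSet_Ioi heqIoi, integral_const_mul,
      integral_Ioi_rpow_of_lt hexp hr]
    have hl1 : (1:ℝ) ≤ (l:ℝ) := by exact_mod_cast hl
    have hkey : r ^ (2*l) * r ^ (-(2 * (l:ℝ)) + 1) = r := by
      rw [← Real.rpow_natCast r (2*l), ← Real.rpow_add hr]
      push_cast
      rw [show (2:ℝ)*(l:ℝ) + (-(2 * (l:ℝ)) + 1) = 1 by ring, Real.rpow_one]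
    have hne : (2*(l:ℝ)-1) ≠ 0 := by linarith
    have hne2 : (-(2*(l:ℝ))+1) ≠ 0 := by intro hx; apply hne; linarith
    calc r ^ (2*l) * (-r ^ (-(2 * (l:ℝ)) + 1) / (-(2 * (l:ℝ)) + 1))
        = (r ^ (2*l) * r ^ (-(2 * (l:ℝ)) + 1)) * (-1 / (-(2 * (l:ℝ)) + 1)) := by ring
      _ = r * (-1 / (-(2 * (l:ℝ)) + 1)) := by rw [hkey]
      _ = r / (2*(l:ℝ)-1) := by field_simp; ring
  have hl1 : (1:ℝ) ≤ (l:ℝ) := by exact_mod_cast hl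
  have h2l1 : (0:ℝ) < 2*(l:ℝ)-1 := by linarith
  have hA : ∫ s in Set.Ioi (0:ℝ), g s ^ 2 = r/(2*(l:ℝ)+3) + r/(2*(l:ℝ)-1) := by
    rw [← hsplit, setIntegral_union (Set.Ioc_disjoint_Ioi le_rfl) measurableSet_Ioi hint1 hint2,
      hI1, hI2]
  -- the f-side integrand
  have hinth : Integrable (fun s => h s ^ 2) μ := by
    have hsq : HasCompactSupport (fun s => h s ^ 2) := by
      have := hhcs.comp_left (g := fun x : ℝ => x ^ 2) (by simp)
      exact this
    exact ((hhc.pow 2).integrable_of_hasCompactSupport hsq).integrableOn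
  -- Cauchy–Schwarz
  have hpq : Real.HolderConjugate 2 2 := Real.HolderConjugate.two_two
  have hmem_g : MemLp (fun s => |g s|) (ENNReal.ofReal 2) μ := by
    rw [show ENNReal.ofReal 2 = 2 by norm_num,
      memLp_two_iff_integrable_sq hgc.abs.aestronglyMeasurable]
    simpa [sq_abs] using hintg
  have hmem_h : MemLp (fun s => |h s|) (ENNReal.ofReal 2) μ := by
    rw [show ENNReal.ofReal 2 = 2 by norm_num,
      memLp_two_iff_integrable_sq hhc.abs.aestronglyMeasurable]
    simpa [sq_abs] using hinth
  have hCS := integral_mul_le_Lp_mul_Lq_of_nonneg hpq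
    (Filter.Eventually.of_forall fun x => abs_nonneg (g x))
    (Filter.Eventually.of_forall fun x => abs_nonneg (h x)) hmem_g hmem_h
  have habs2 : ∀ u : ℝ → ℝ, (fun a => |u a| ^ (2:ℝ)) = fun a => u a ^ 2 := by
    intro u; funext a
    rw [show ((2:ℝ)) = ((2:ℕ):ℝ) by norm_cast, Real.rpow_natCast, sq_abs]
  simp only [habs2] at hCS
  rw [← Real.sqrt_eq_rpow, ← Real.sqrt_eq_rpow] at hCS
  -- identify the integrands
  have hone : (fun s => (min r s) ^ l / (max r s) ^ (l + 1) * f s * s ^ 2)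
      = fun s => g s * h s := by
    funext s; simp only [hg, hh]; ring
  have hB : (fun s : ℝ => h s ^ 2) = fun s => f s ^ 2 * s ^ 2 := by
    funext s; simp only [hh]; ring
  have habs : |∫ s in Set.Ioi (0:ℝ), g s * h s| ≤ ∫ s in Set.Ioi (0:ℝ), |g s| * |h s| := by
    simpa [Real.norm_eq_abs, abs_mul] using
      norm_integral_le_integral_norm (μ := volume.restrict (Set.Ioi (0:ℝ)))
        (fun s => g s * h s)
  -- bound the kernel norm
  have hsA : Real.sqrt (∫ s in Set.Ioi (0:ℝ), g s ^ 2)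
      ≤ 2 * Real.sqrt r / Real.sqrt (2*(l:ℝ)-1) := by
    rw [hA]
    have h1 : r/(2*(l:ℝ)+3) + r/(2*(l:ℝ)-1) ≤ 2*r/(2*(l:ℝ)-1) := by
      have : r/(2*(l:ℝ)+3) ≤ r/(2*(l:ℝ)-1) := by
        apply div_le_div_of_nonneg_left hr.le h2l1 (by linarith)
      linarith [this, show 2*r/(2*(l:ℝ)-1) = r/(2*(l:ℝ)-1) + r/(2*(l:ℝ)-1) by ring]
    calc Real.sqrt (r/(2*(l:ℝ)+3) + r/(2*(l:ℝ)-1)) ≤ Real.sqrt (2*r/(2*(l:ℝ)-1)) :=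
          Real.sqrt_le_sqrt h1
      _ = Real.sqrt (2*r) / Real.sqrt (2*(l:ℝ)-1) := Real.sqrt_div (by linarith) _
      _ ≤ 2 * Real.sqrt r / Real.sqrt (2*(l:ℝ)-1) := by
          rw [div_le_div_iff_of_pos_right (Real.sqrt_pos.2 h2l1)]
          rw [Real.sqrt_mul (by norm_num : (0:ℝ) ≤ 2)]
          have h2 : Real.sqrt 2 ≤ 2 := by
            nlinarith [Real.sq_sqrt (by norm_num : (0:ℝ) ≤ 2), Real.sqrt_nonneg 2]
          exact mul_le_mul_of_nonneg_right h2 (Real.sqrt_nonneg r)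
  -- put things together
  have hC0 : 0 ≤ Real.sqrt (∫ s in Set.Ioi (0:ℝ), f s ^ 2 * s ^ 2) := Real.sqrt_nonneg _
  have hpos : (0:ℝ) < 2*(l:ℝ)+1 := by linarith
  rw [hone, abs_mul, abs_neg, abs_of_nonneg (by positivity : (0:ℝ) ≤ 1/(2*(l:ℝ)+1))]
  have hint_eq : (∫ s in Set.Ioi (0:ℝ), h s ^ 2) = ∫ s in Set.Ioi (0:ℝ), f s ^ 2 * s ^ 2 := by
    rw [hB]
  calc 1/(2*(l:ℝ)+1) * |∫ s in Set.Ioi (0:ℝ), g s * h s|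
      ≤ 1/(2*(l:ℝ)+1) * (Real.sqrt (∫ s in Set.Ioi (0:ℝ), g s ^ 2) *
          Real.sqrt (∫ s in Set.Ioi (0:ℝ), h s ^ 2)) := by
        apply mul_le_mul_of_nonneg_left _ (by positivity)
        exact le_trans habs hCS
    _ ≤ 1/(2*(l:ℝ)+1) * ((2 * Real.sqrt r / Real.sqrt (2*(l:ℝ)-1)) *
          Real.sqrt (∫ s in Set.Ioi (0:ℝ), f s ^ 2 * s ^ 2)) := by
        rw [hint_eq]
        apply mul_le_mul_of_nonneg_left _ (by positivity)
        exact mul_le_mul_of_nonneg_right hsA hC0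
    _ = 2 * r ^ ((1:ℝ)/2) / ((2*(l:ℝ)+1) * Real.sqrt (2*(l:ℝ)-1)) *
          Real.sqrt (∫ s in Set.Ioi (0:ℝ), f s ^ 2 * s ^ 2) := by
        rw [← Real.sqrt_eq_rpow]
        have hsq : Real.sqrt (2*(l:ℝ)-1) ≠ 0 := (Real.sqrt_pos.2 h2l1).ne'
        field_simp
end

section
/- For l ≥ 0 define D_k f = ∂_r f + (k/r)f and V₁(r) = 8r/(r²+2)², the potential arising from V₁ = -∂_r(r⁻¹ D₂⁻¹Q) with Q(r)=4(6+r²)/(2+r²)². Then for any real β with l - β > -1/2, the symmetrized weight W(r) := (1/2)∂_r V₁ + ((l+2-β)/r) V₁ equals (8(l-β)+4)/(r²+2)² + 32/(r²+2)³ and is strictly positive on (0,∞). -/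
theorem hasDerivAt_potential (r : ℝ) :
    HasDerivAt (fun r : ℝ => 8 * r / (r ^ 2 + 2) ^ 2)
      ((16 - 24 * r ^ 2) / (r ^ 2 + 2) ^ 3) r := by
  have hnum : HasDerivAt (fun r : ℝ => 8 * r) 8 r := by
    simpa using (hasDerivAt_id r).const_mul (8 : ℝ)
  have hden : HasDerivAt (fun r : ℝ => (r ^ 2 + 2) ^ 2) (2 * (r ^ 2 + 2) ^ 1 * (2 * r)) r := by
    simpa using ((hasDerivAt_pow 2 r).add_const (2 : ℝ)).fun_pow 2
  refine (hnum.fun_div hden (by positivity)).congr_deriv ?_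
  field_simp
  ring

theorem weight_eq (c : ℝ) {r : ℝ} (hr : r ≠ 0) :
    (1 / 2) * ((16 - 24 * r ^ 2) / (r ^ 2 + 2) ^ 3) + ((c + 2) / r) * (8 * r / (r ^ 2 + 2) ^ 2) =
      (8 * c + 4) / (r ^ 2 + 2) ^ 2 + 32 / (r ^ 2 + 2) ^ 3 := by
  field_simp
  ring

theorem weight_pos {c : ℝ} (hc : c > -(1 / 2)) (r : ℝ) :
    0 < (8 * c + 4) / (r ^ 2 + 2) ^ 2 + 32 / (r ^ 2 + 2) ^ 3 := by
  have hnum : 0 < 8 * c + 4 := by linarith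
  positivity

/-- For `V₁(r) = 8r/(r²+2)²` and `l - β > -1/2`, the symmetrized weight
`W = (1/2)∂_r V₁ + ((l+2-β)/r) V₁` equals `(8(l-β)+4)/(r²+2)² + 32/(r²+2)³` and is positive. -/
theorem stmt_10 (l : ℕ) (β : ℝ) (hβ : (l : ℝ) - β > -(1 / 2))
    (V₁ : ℝ → ℝ) (hV₁ : ∀ r, V₁ r = 8 * r / (r ^ 2 + 2) ^ 2)
    (W : ℝ → ℝ)
    (hW : ∀ r, W r = (1 / 2) * deriv V₁ r + (((l : ℝ) + 2 - β) / r) * V₁ r) :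
    ∀ r ∈ Set.Ioi (0 : ℝ),
      W r = (8 * ((l : ℝ) - β) + 4) / (r ^ 2 + 2) ^ 2 + 32 / (r ^ 2 + 2) ^ 3 ∧ 0 < W r := by
  intro r hr
  have hderiv : deriv V₁ r = (16 - 24 * r ^ 2) / (r ^ 2 + 2) ^ 3 := by
    rw [funext hV₁]
    exact (hasDerivAt_potential r).deriv
  have hWr : W r = (8 * ((l : ℝ) - β) + 4) / (r ^ 2 + 2) ^ 2 + 32 / (r ^ 2 + 2) ^ 3 := by
    rw [hW, hderiv, hV₁, show (l : ℝ) + 2 - β = ((l : ℝ) - β) + 2 by ring]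
    exact weight_eq _ (ne_of_gt hr)
  exact ⟨hWr, hWr ▸ weight_pos hβ r⟩
end
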